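/- arXiv:2302.12865 — 3 statements merged into one kernel-verified Lean document; each statement's English description precedes it below -/
import Mathlib

section
/- For any metric space X and any metrically convex function f, 2·d_GH(X, f(X)) ≤ sup_{x ∈ A} |x − f(x)|, where f(X) denotes X equipped with metric f ∘ d_X, and A = [s(X), diam X] if diam X < ∞ and A = [s(X), ∞) otherwise, where s(X) = inf{ d(x,x′) : x ≠ x′ }. -/
/-!
Transport along `e` is a correspondence between `X` and `f(X)` whose distortion is
`sup |d - f d|` over the distances `d` occurring in `X`, all of which lie in `[s(X), diam X]`.
A bijection of distortion at most `2ε` lets one glue `X` and `Y` into a metric space in which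
every `x` lies at distance `ε` from `e x`, so `d_GH(X, Y) ≤ ε`.
-/

open scoped NNReal ENNReal

universe u v

def MetricallyConvex (f : ℝ≥0 → ℝ≥0) : Prop :=
  f 0 = 0 ∧ (¬ ∀ x y : ℝ≥0, f x = f y) ∧ ∀ a b c : ℝ≥0, a ≤ b + c → f a ≤ f b + f c

noncomputable def ghDist (A : Type u) (B : Type v) [MetricSpace A] [MetricSpace B] : ℝ≥0∞ :=
  sInf {r : ℝ≥0∞ | ∃ (Z : Type (max u v)) (_ : MetricSpace Z) (fA : A → Z) (fB : B → Z),
    Isometry fA ∧ Isometry fB ∧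
    EMetric.hausdorffEdist (Set.range fA) (Set.range fB) ≤ r}

/-- The infimum of distances between distinct points of `X`, as a value in `ℝ≥0∞`. -/
noncomputable def sepInf (X : Type u) [MetricSpace X] : ℝ≥0∞ :=
  sInf {r : ℝ≥0∞ | ∃ x x' : X, x ≠ x' ∧ r = edist x x'}

open Set

theorem Metric.hausdorffEDist_range_le_of_forall_edist_le {α ι : Type*} [PseudoEMetricSpace α]
    {g h : ι → α} {r : ℝ≥0∞} (H : ∀ i, edist (g i) (h i) ≤ r) :
    Metric.hausdorffEDist (range g) (range h) ≤ r :=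
  Metric.hausdorffEDist_le_of_mem_edist
    (forall_mem_range.2 fun i => ⟨h i, mem_range_self i, H i⟩)
    (forall_mem_range.2 fun i => ⟨g i, mem_range_self i, edist_comm (h i) (g i) ▸ H i⟩)

theorem sepInf_le_edist {X : Type u} [MetricSpace X] {x x' : X} (h : x ≠ x') :
    sepInf X ≤ edist x x' :=
  sInf_le ⟨x, x', h, rfl⟩

theorem ghDist_le_hausdorffEDist_range {A : Type u} {B : Type v} [MetricSpace A] [MetricSpace B]
    {Z : Type (max u v)} [MetricSpace Z] {fA : A → Z} {fB : B → Z}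
    (hA : Isometry fA) (hB : Isometry fB) :
    ghDist A B ≤ Metric.hausdorffEDist (range fA) (range fB) :=
  sInf_le ⟨Z, _, fA, fB, hA, hB, le_rfl⟩

theorem ghDist_le_of_abs_dist_sub_le {X : Type u} {Y : Type v} [MetricSpace X] [MetricSpace Y]
    (e : X ≃ Y) {ε : ℝ} (hε : 0 < ε) (H : ∀ p q : X, |dist p q - dist (e p) (e q)| ≤ 2 * ε) :
    ghDist X Y ≤ ENNReal.ofReal ε := by
  obtain ⟨_, hl, hr, hglued⟩ : ∃ _ : MetricSpace (X ⊕ Y), Isometry (Sum.inl : X → X ⊕ Y) ∧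
      Isometry (Sum.inr : Y → X ⊕ Y) ∧
      ∀ x, edist (Sum.inl x : X ⊕ Y) (Sum.inr (e x)) ≤ ENNReal.ofReal ε := by
    cases isEmpty_or_nonempty X with
    | inl _ => exact ⟨Metric.metricSpaceSum, Metric.isometry_inl, Metric.isometry_inr, isEmptyElim⟩
    | inr _ =>
      let := Metric.glueMetricApprox id e ε hε H
      refine ⟨this, .of_dist_eq fun _ _ => rfl, .of_dist_eq fun _ _ => rfl, fun x => ?_⟩
      rw [edist_dist]
      exact (congrArg ENNReal.ofReal (Metric.glueDist_glued_points id e ε x)).le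
  calc ghDist X Y ≤ Metric.hausdorffEDist (range Sum.inl) (range Sum.inr) :=
        ghDist_le_hausdorffEDist_range hl hr
    _ = Metric.hausdorffEDist (range Sum.inl) (range (Sum.inr ∘ e)) := by
        rw [e.surjective.range_comp]
    _ ≤ ENNReal.ofReal ε := Metric.hausdorffEDist_range_le_of_forall_edist_le hglued

theorem two_mul_ghDist_le_of_forall_edist_nndist_le {X : Type u} {Y : Type v} [MetricSpace X]
    [MetricSpace Y] (e : X ≃ Y) {D : ℝ≥0∞}
    (H : ∀ p q : X, edist (nndist p q) (nndist (e p) (e q)) ≤ D) :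
    2 * ghDist X Y ≤ D := by
  -- The slack `η` keeps the gluing parameter `ε` positive even when `D = 0`.
  refine ENNReal.le_of_forall_pos_le_add fun η hη hD => ?_
  lift D to ℝ≥0 using hD.ne
  have hgh := ghDist_le_of_abs_dist_sub_le e (ε := (D + η) / 2) (by positivity) fun p q => by
    have hpq : dist (nndist p q) (nndist (e p) (e q)) ≤ D := by
      exact_mod_cast edist_le_coe.1 (H p q)
    rw [NNReal.dist_eq, coe_nndist, coe_nndist] at hpq
    linarith
  calc 2 * ghDist X Y ≤ 2 * ENNReal.ofReal ((D + η) / 2) := by gcongr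
    _ = D + η := by
      rw [← ENNReal.ofReal_ofNat 2, ← ENNReal.ofReal_mul zero_le_two, mul_div_cancel₀ _ two_ne_zero]
      exact_mod_cast ENNReal.ofReal_coe_nnreal

theorem two_ghDist_to_image_le_general {X : Type u} {Y : Type v} [MetricSpace X] [MetricSpace Y]
    (f : ℝ≥0 → ℝ≥0) (e : X ≃ Y)
    (he : ∀ x x' : X, nndist (e x) (e x') = f (nndist x x')) :
    2 * ghDist X Y ≤
      ⨆ x ∈ {d : ℝ≥0 | sepInf X ≤ (d : ℝ≥0∞) ∧
        (d : ℝ≥0∞) ≤ EMetric.diam (Set.univ : Set X)}, edist x (f x) := by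
  refine two_mul_ghDist_le_of_forall_edist_nndist_le e fun x x' => ?_
  rcases eq_or_ne x x' with rfl | hne
  · simp
  rw [he]
  refine le_iSup₂_of_le (nndist x x') ⟨?_, ?_⟩ le_rfl <;> rw [← edist_nndist]
  · exact sepInf_le_edist hne
  · exact Metric.edist_le_ediam_of_mem (mem_univ x) (mem_univ x')

/-- For a metric space `X` and a metrically convex `f`, if `Y` realizes `f(X)` (i.e. `Y` is `X`
with the metric `f ∘ d_X`), then `2 d_GH(X, f(X)) ≤ sup_{x ∈ A} |x - f x|` where
`A = [s(X), diam X]` if the diameter is finite and `A = [s(X), ∞)` otherwise. -/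
theorem two_ghDist_to_image_le {X : Type u} {Y : Type v} [MetricSpace X] [MetricSpace Y]
    (f : ℝ≥0 → ℝ≥0) (hf : MetricallyConvex f) (e : X ≃ Y)
    (he : ∀ x x' : X, nndist (e x) (e x') = f (nndist x x')) :
    2 * ghDist X Y ≤
      ⨆ x ∈ {d : ℝ≥0 | sepInf X ≤ (d : ℝ≥0∞) ∧
        (d : ℝ≥0∞) ≤ EMetric.diam (Set.univ : Set X)}, edist x (f x) :=
  two_ghDist_to_image_le_general f e he
end

section
/- Let X be a metric space and c > 0, and let X + c denote X with metric d′(x,y) = d(x,y) + c for x ≠ y, d′(x,x) = 0. Then e(X + c) = e(X), where e(Y) = inf{ dis f : f a bijection Y → Y, f ≠ id } and dis f = sup_{a,a′} |d(a,a′) − d(f(a),f(a′))|. -/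
open scoped NNReal ENNReal Classical

lemma abs_sub_dist_add_const_eq {X : Type*} [PseudoMetricSpace X] (c : ℝ) (d' : X → X → ℝ)
    (hd' : ∀ x y : X, d' x y = if x = y then 0 else dist x y + c)
    {f : X → X} (hf : Function.Injective f) (a a' : X) :
    |d' a a' - d' (f a) (f a')| = |dist a a' - dist (f a) (f a')| := by
  rw [hd', hd']
  by_cases h : a = a'
  · simp [h]
  · rw [if_neg h, if_neg (hf.ne h), add_sub_add_right_eq_sub]

theorem add_const_min_distortion_general {X : Type*} [MetricSpace X] (c : ℝ)
    (d' : X → X → ℝ) (hd' : ∀ x y : X, d' x y = if x = y then 0 else dist x y + c) :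
    sInf {r : ℝ≥0∞ | ∃ f : X ≃ X, f ≠ Equiv.refl X ∧
        r = ⨆ (a : X) (a' : X), ENNReal.ofReal |d' a a' - d' (f a) (f a')|} =
      sInf {r : ℝ≥0∞ | ∃ f : X ≃ X, f ≠ Equiv.refl X ∧
        r = ⨆ (a : X) (a' : X), ENNReal.ofReal |dist a a' - dist (f a) (f a')|} := by
  simp only [abs_sub_dist_add_const_eq c d' hd' (Equiv.injective _)]

/-- `e(X + c) = e(X)`, where `e` is the infimum of distortions of non-identity
self-bijections, the distortion being `sup |d(a,a') - d(f a, f a')|` (in `ℝ≥0∞`). -/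
theorem add_const_min_distortion {X : Type*} [MetricSpace X] (c : ℝ) (hc : 0 < c)
    (d' : X → X → ℝ) (hd' : ∀ x y : X, d' x y = if x = y then 0 else dist x y + c) :
    sInf {r : ℝ≥0∞ | ∃ f : X ≃ X, f ≠ Equiv.refl X ∧
        r = ⨆ (a : X) (a' : X), ENNReal.ofReal |d' a a' - d' (f a) (f a')|} =
      sInf {r : ℝ≥0∞ | ∃ f : X ≃ X, f ≠ Equiv.refl X ∧
        r = ⨆ (a : X) (a' : X), ENNReal.ofReal |dist a a' - dist (f a) (f a')|} :=
  add_const_min_distortion_general c d' hd'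
end

section
/- For every metric space X and every η > 0, there exists a generic metric space U with d_GH(X, U) ≤ η, i.e., generic metric spaces are dense in the Gromov–Hausdorff class. Moreover, for any δ, c > 0 with δ + c ≤ η, U can be chosen with s(U) ≥ δ/3 + 2c, t(U) ≥ 2c, and e(U) ≥ δ/3. -/
open scoped NNReal ENNReal

universe u

def IsCorrespondence {A B : Type u} (R : Set (A × B)) : Prop :=
  (∀ a : A, ∃ b : B, (a, b) ∈ R) ∧ (∀ b : B, ∃ a : A, (a, b) ∈ R)

noncomputable def corrDistortion {A B : Type u} [MetricSpace A] [MetricSpace B]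
    (R : Set (A × B)) : ℝ≥0∞ :=
  ⨆ p ∈ R, ⨆ q ∈ R, ENNReal.ofReal |dist p.1 q.1 - dist p.2 q.2|

/-- Twice the Gromov–Hausdorff distance, expressed as the infimum of distortions of
correspondences. -/
noncomputable def twoGhDist (A B : Type u) [MetricSpace A] [MetricSpace B] : ℝ≥0∞ :=
  ⨅ (R : Set (A × B)) (_ : IsCorrespondence R), corrDistortion R

/-- `t(X)`: the infimum of triangle defects over pairwise distinct triples. -/
noncomputable def defectInf (X : Type u) [MetricSpace X] : ℝ≥0∞ :=
  sInf {r : ℝ≥0∞ | ∃ x y z : X, x ≠ y ∧ y ≠ z ∧ x ≠ z ∧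
    r = ENNReal.ofReal (dist x y + dist y z - dist x z)}

/-- `e(X)`: the infimum of distortions of non-identity self-bijections. -/
noncomputable def bijDistortionInf (X : Type u) [MetricSpace X] : ℝ≥0∞ :=
  sInf {r : ℝ≥0∞ | ∃ f : X ≃ X, f ≠ Equiv.refl X ∧
    r = ⨆ (a : X) (a' : X), ENNReal.ofReal |dist a a' - dist (f a) (f a')|}

/-
Take `U = X × L` for an asymmetric graph `G` on a six-element label set `L`, put `m = δ / 3`,
and for `p ≠ q` set
  `d(p, q) = 2m ⌈d(p.1, q.1) / 2m⌉ + (2c + m) + m [p ~ q]`,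
where `p ~ q` marks the edges of `G` inside each fibre `{x} × L` and, across fibres, the pairs
`(x, a), (y, b)` with `x` below `y` in a well-order of `X`. Rounding up to multiples of `2m` moves
distances by less than `2m` and leaves every triangle defect at least `2c`. A bijection of
distortion below `m` cannot trade a jump of `2m` in the rounded part for the mark, so it
preserves fibres and marks; asymmetry of `G` then fixes every label, and the induced
automorphism of the well-order of `X` is the identity.
-/

theorem twoGhDist_le_of_surjective {A B : Type u} [MetricSpace A] [MetricSpace B]
    (φ : B → A) (hφ : φ.Surjective) {a : ℝ} (h : ∀ b b', |dist (φ b) (φ b') - dist b b'| ≤ a) :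
    twoGhDist A B ≤ ENNReal.ofReal a := by
  let R : Set (A × B) := {p | φ p.2 = p.1}
  have hR : IsCorrespondence R := ⟨fun x => (hφ x).imp fun _ hb => hb, fun b => ⟨φ b, rfl⟩⟩
  refine iInf₂_le_of_le R hR (iSup₂_le fun p hp => iSup₂_le fun q hq => ?_)
  rw [← show φ p.2 = p.1 from hp, ← show φ q.2 = q.1 from hq]
  exact ENNReal.ofReal_le_ofReal (h p.2 q.2)

theorem ofReal_le_sepInf {U : Type u} [MetricSpace U] {a : ℝ}
    (h : ∀ u v : U, u ≠ v → a ≤ dist u v) : ENNReal.ofReal a ≤ sepInf U := by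
  refine le_sInf ?_
  rintro _ ⟨u, v, huv, rfl⟩
  exact edist_dist u v ▸ ENNReal.ofReal_le_ofReal (h u v huv)

theorem ofReal_le_defectInf {U : Type u} [MetricSpace U] {a : ℝ}
    (h : ∀ x y z : U, x ≠ y → y ≠ z → x ≠ z → a ≤ dist x y + dist y z - dist x z) :
    ENNReal.ofReal a ≤ defectInf U := by
  refine le_sInf ?_
  rintro _ ⟨x, y, z, hxy, hyz, hxz, rfl⟩
  exact ENNReal.ofReal_le_ofReal (h x y z hxy hyz hxz)

theorem ofReal_le_bijDistortionInf {U : Type u} [MetricSpace U] {a : ℝ}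
    (h : ∀ f : U ≃ U, (∀ u v, |dist u v - dist (f u) (f v)| < a) → f = Equiv.refl U) :
    ENNReal.ofReal a ≤ bijDistortionInf U := by
  refine le_sInf ?_
  rintro _ ⟨f, hf, rfl⟩
  obtain ⟨u, v, huv⟩ : ∃ u v, a ≤ |dist u v - dist (f u) (f v)| := by
    by_contra! hlt
    exact hf (h f hlt)
  exact le_iSup₂_of_le u v (ENNReal.ofReal_le_ofReal huv)

section MarkedDist

variable {X L : Type*} [MetricSpace X] {m c : ℝ}

theorem ceil_dist_div_nonneg (hm : 0 < m) (x y : X) : 0 ≤ ⌈dist x y / (2 * m)⌉ :=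
  Int.ceil_nonneg (by positivity)

theorem two_mul_ceil_dist_div_le_add (hm : 0 < m) (x y z : X) :
    2 * m * ⌈dist x z / (2 * m)⌉ ≤ 2 * m * ⌈dist x y / (2 * m)⌉ + 2 * m * ⌈dist y z / (2 * m)⌉ := by
  rw [← mul_add]
  gcongr
  refine mod_cast (Int.ceil_mono ?_).trans (Int.ceil_add_le _ _)
  rw [← add_div]
  gcongr
  exact dist_triangle x y z

theorem ceil_dist_div_eq_zero_iff (hm : 0 < m) {x y : X} :
    ⌈dist x y / (2 * m)⌉ = 0 ↔ x = y := by
  rw [← not_iff_not, ← Ne, ← (ceil_dist_div_nonneg hm x y).lt_iff_ne', Int.ceil_pos,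
    div_pos_iff_of_pos_right (by positivity), dist_pos]

open Classical in
noncomputable def markedDist (m c : ℝ) (r : X × L → X × L → Prop) (p q : X × L) : ℝ :=
  if p = q then 0 else 2 * m * ⌈dist p.1 q.1 / (2 * m)⌉ + (2 * c + m) + if r p q then m else 0

variable {r : X × L → X × L → Prop}

theorem markedDist_self (p : X × L) : markedDist m c r p p = 0 := if_pos rfl

open Classical in
theorem markedDist_of_ne {p q : X × L} (h : p ≠ q) : markedDist m c r p q =
    2 * m * ⌈dist p.1 q.1 / (2 * m)⌉ + (2 * c + m) + if r p q then m else 0 := if_neg h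

theorem markedDist_comm [Std.Symm r] (p q : X × L) :
    markedDist m c r p q = markedDist m c r q p := by
  rcases eq_or_ne p q with rfl | h
  · rfl
  · rw [markedDist_of_ne h, markedDist_of_ne h.symm, dist_comm,
      propext (Std.Symm.iff (r := r) p q)]

theorem add_le_markedDist (hm : 0 < m) {p q : X × L} (h : p ≠ q) :
    m + 2 * c ≤ markedDist m c r p q := by
  have hk : 0 ≤ 2 * m * ⌈dist p.1 q.1 / (2 * m)⌉ :=
    mul_nonneg (by positivity) (mod_cast ceil_dist_div_nonneg hm _ _)
  rw [markedDist_of_ne h]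
  split_ifs <;> linarith

theorem abs_dist_sub_markedDist_le (hm : 0 < m) (hc : 0 ≤ c) (p q : X × L) :
    |dist p.1 q.1 - markedDist m c r p q| ≤ 4 * m + 2 * c := by
  rcases eq_or_ne p q with rfl | h
  · simp only [dist_self, markedDist_self, sub_zero, abs_zero]; positivity
  have hle := Int.le_ceil (dist p.1 q.1 / (2 * m))
  have hlt := Int.ceil_lt_add_one (dist p.1 q.1 / (2 * m))
  rw [div_le_iff₀ (by positivity)] at hle
  rw [← sub_lt_iff_lt_add, lt_div_iff₀ (by positivity)] at hlt
  rw [markedDist_of_ne h, abs_le]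
  constructor <;> split_ifs <;> linarith

theorem markedDist_triangle (hm : 0 < m) (hc : 0 ≤ c) (p q w : X × L) :
    markedDist m c r p w ≤ markedDist m c r p q + markedDist m c r q w := by
  rcases eq_or_ne p q with rfl | hpq
  · rw [markedDist_self, zero_add]
  rcases eq_or_ne q w with rfl | hqw
  · rw [markedDist_self, add_zero]
  rcases eq_or_ne p w with rfl | hpw
  · rw [markedDist_self]; linarith [add_le_markedDist (r := r) (c := c) hm hpq,
      add_le_markedDist (r := r) (c := c) hm hqw]
  have := two_mul_ceil_dist_div_le_add hm p.1 q.1 w.1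
  rw [markedDist_of_ne hpq, markedDist_of_ne hqw, markedDist_of_ne hpw]
  split_ifs <;> linarith

theorem le_markedDist_add_markedDist_sub (hm : 0 < m) {p q w : X × L} (hpq : p ≠ q) (hqw : q ≠ w)
    (hpw : p ≠ w) : 2 * c ≤ markedDist m c r p q + markedDist m c r q w - markedDist m c r p w := by
  have := two_mul_ceil_dist_div_le_add hm p.1 q.1 w.1
  rw [markedDist_of_ne hpq, markedDist_of_ne hqw, markedDist_of_ne hpw]
  split_ifs <;> linarith

theorem ceil_eq_and_iff_of_abs_markedDist_sub_lt (hm : 0 < m) {p q p' q' : X × L} (h : p ≠ q)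
    (h' : p' ≠ q') (hlt : |markedDist m c r p q - markedDist m c r p' q'| < m) :
    ⌈dist p.1 q.1 / (2 * m)⌉ = ⌈dist p'.1 q'.1 / (2 * m)⌉ ∧ (r p q ↔ r p' q') := by
  rw [markedDist_of_ne h, markedDist_of_ne h', abs_lt] at hlt
  set k := ⌈dist p.1 q.1 / (2 * m)⌉
  set k' := ⌈dist p'.1 q'.1 / (2 * m)⌉
  have hk : k = k' := by
    by_contra hne
    rcases Int.lt_or_gt_of_ne hne with hlt' | hlt'
    · have : 2 * m * (k + 1) ≤ 2 * m * k' := by gcongr; exact_mod_cast hlt'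
      split_ifs at hlt <;> linarith
    · have : 2 * m * (k' + 1) ≤ 2 * m * k := by gcongr; exact_mod_cast hlt'
      split_ifs at hlt <;> linarith
  refine ⟨hk, ?_⟩
  rw [hk] at hlt
  split_ifs at hlt with hr hr' hr'
  · exact iff_of_true hr hr'
  · linarith
  · linarith
  · exact iff_of_false hr hr'

noncomputable abbrev markedMetricSpace (hm : 0 < m) (hc : 0 ≤ c) (r : X × L → X × L → Prop)
    [Std.Symm r] : MetricSpace (X × L) where
  dist := markedDist m c r
  dist_self := markedDist_self
  dist_comm := markedDist_comm
  dist_triangle := markedDist_triangle hm hc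
  eq_of_dist_eq_zero {p q} h := by
    by_contra hpq
    have := add_le_markedDist (c := c) (r := r) hm hpq
    linarith [show markedDist m c r p q = 0 from h]

end MarkedDist

section RigidMark

variable {X L : Type*} (G : SimpleGraph L) (s : X → X → Prop) (a b : L)

def rigidMark (p q : X × L) : Prop :=
  (p.1 = q.1 ∧ G.Adj p.2 q.2) ∨ (s p.1 q.1 ∧ p.2 = a ∧ q.2 = b) ∨ (s q.1 p.1 ∧ p.2 = b ∧ q.2 = a)

instance : Std.Symm (rigidMark G s a b) where
  symm p q := by
    rintro (⟨h, hG⟩ | ⟨hs, hp, hq⟩ | ⟨hs, hp, hq⟩)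
    · exact Or.inl ⟨h.symm, hG.symm⟩
    · exact Or.inr (Or.inr ⟨hs, hq, hp⟩)
    · exact Or.inr (Or.inl ⟨hs, hq, hp⟩)

variable {G s a b}

theorem rigidMark_mk_mk_of_ne (hab : a ≠ b) {x y : X} (hxy : x ≠ y) :
    rigidMark G s a b (x, a) (y, b) ↔ s x y := by
  simp [rigidMark, hxy, hab.symm]

variable [IsWellOrder X s]

theorem rigidMark_mk_mk_same (x : X) (i j : L) : rigidMark G s a b (x, i) (x, j) ↔ G.Adj i j := by
  simp [rigidMark, irrefl_of s x]

variable {f : X × L ≃ X × L} (hfib : ∀ p q, (f p).1 = (f q).1 ↔ p.1 = q.1)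
  (hmark : ∀ p q, p ≠ q → (rigidMark G s a b (f p) (f q) ↔ rigidMark G s a b p q))
include hfib hmark

theorem snd_apply_mk_eq_of_preserves_rigidMark (hG : ∀ σ : G ≃g G, σ = .refl) (x : X) (i : L) :
    (f (x, i)).2 = i := by
  set y := (f (x, i)).1
  have hy (j : L) : (f (x, j)).1 = y := (hfib _ _).2 rfl
  have hx (j : L) : (f.symm (y, j)).1 = x := (hfib _ (x, i)).1 (by simp [y])
  let σ : G ≃g G :=
    { toFun j := (f (x, j)).2
      invFun j := (f.symm (y, j)).2
      left_inv j := by simp only [← hy j, Prod.mk.eta, Equiv.symm_apply_apply]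
      right_inv j := by simp only [← hx j, Prod.mk.eta, Equiv.apply_symm_apply]
      map_rel_iff' {j k} := by
        rcases eq_or_ne j k with rfl | hjk
        · simp
        have := hmark (x, j) (x, k) (by simpa using hjk)
        rwa [← Prod.mk.eta (p := f (x, j)), ← Prod.mk.eta (p := f (x, k)), hy, hy,
          rigidMark_mk_mk_same, rigidMark_mk_mk_same] at this }
  exact DFunLike.congr_fun (hG σ) i

theorem eq_refl_of_preserves_rigidMark (hG : ∀ σ : G ≃g G, σ = .refl) (hab : a ≠ b) :
    f = Equiv.refl _ := by
  set g : X → X := fun x => (f (x, a)).1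
  have hf (x : X) (i : L) : f (x, i) = (g x, i) :=
    Prod.ext ((hfib _ _).2 rfl) (snd_apply_mk_eq_of_preserves_rigidMark hfib hmark hG x i)
  have hg_inj : g.Injective := fun x y h => (hfib (x, a) (y, a)).1 h
  have hg_surj : g.Surjective := fun y =>
    ⟨_, by simpa using congrArg Prod.fst (hf (f.symm (y, a)).1 (f.symm (y, a)).2).symm⟩
  let φ : s ≃r s :=
    { toEquiv := Equiv.ofBijective g ⟨hg_inj, hg_surj⟩
      map_rel_iff' {x y} := by
        rcases eq_or_ne x y with rfl | hxy
        · simp [irrefl_of s]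
        have := hmark (x, a) (y, b) (by simp [hxy])
        rwa [hf, hf, rigidMark_mk_mk_of_ne hab (hg_inj.ne hxy),
          rigidMark_mk_mk_of_ne hab hxy] at this }
  have hg (x : X) : g x = x := InitialSeg.eq_relIso (InitialSeg.refl s) φ x
  ext1 ⟨x, i⟩
  rw [hf, hg, Equiv.refl_apply]

end RigidMark

theorem eq_refl_of_abs_markedDist_sub_lt {X L : Type*} [MetricSpace X] {G : SimpleGraph L}
    {s : X → X → Prop} [IsWellOrder X s] {a b : L} {m c : ℝ} (hm : 0 < m)
    (hG : ∀ σ : G ≃g G, σ = .refl) (hab : a ≠ b) (f : X × L ≃ X × L)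
    (hf : ∀ p q, |markedDist m c (rigidMark G s a b) p q -
      markedDist m c (rigidMark G s a b) (f p) (f q)| < m) :
    f = Equiv.refl _ := by
  have key {p q : X × L} (h : p ≠ q) :=
    ceil_eq_and_iff_of_abs_markedDist_sub_lt hm h (f.injective.ne h) (hf p q)
  refine eq_refl_of_preserves_rigidMark (fun p q => ?_) (fun p q h => (key h).2.symm) hG hab
  rcases eq_or_ne p q with rfl | h
  · exact iff_of_true rfl rfl
  rw [← ceil_dist_div_eq_zero_iff hm, ← (key h).1, ceil_dist_div_eq_zero_iff hm]

-- The smallest asymmetric graph: a triangle with pendant paths of lengths 2, 1 and 0.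
def gadgetEdges : List (Fin 6 × Fin 6) := [(0, 1), (0, 2), (0, 3), (1, 2), (1, 4), (3, 5)]

def gadget : SimpleGraph (ULift.{u} (Fin 6)) where
  Adj i j := (i.down, j.down) ∈ gadgetEdges ∨ (j.down, i.down) ∈ gadgetEdges
  symm := ⟨fun _ _ => Or.symm⟩
  loopless := ⟨by decide⟩

instance : DecidableRel gadget.{u}.Adj := fun _ _ => instDecidableOr

set_option maxRecDepth 100000 in
theorem gadget_iso_eq_refl (σ : gadget.{u} ≃g gadget) : σ = .refl := by
  have : ∀ τ : Equiv.Perm (ULift.{u} (Fin 6)),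
      (∀ i j, gadget.Adj (τ i) (τ j) ↔ gadget.Adj i j) → τ = 1 := by decide
  exact RelIso.toEquiv_injective (this σ.toEquiv fun _ _ => σ.map_rel_iff)

theorem generic_spaces_dense_general (X : Type u) [MetricSpace X] (η δ c : ℝ)
    (hδ : 0 < δ) (hc : 0 < c) (hδc : δ + c ≤ η) :
    ∃ (U : Type u) (_ : MetricSpace U),
      twoGhDist X U ≤ ENNReal.ofReal (2 * η) ∧
      ENNReal.ofReal (δ / 3 + 2 * c) ≤ sepInf U ∧
      ENNReal.ofReal (2 * c) ≤ defectInf U ∧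
      ENNReal.ofReal (δ / 3) ≤ bijDistortionInf U ∧
      0 < sepInf U ∧ 0 < defectInf U ∧ 0 < bijDistortionInf U := by
  have hm : 0 < δ / 3 := by positivity
  let r := rigidMark gadget.{u} (WellOrderingRel : X → X → Prop) ⟨0⟩ ⟨1⟩
  let _ : MetricSpace (X × ULift.{u} (Fin 6)) := markedMetricSpace hm hc.le r
  have hsep : ENNReal.ofReal (δ / 3 + 2 * c) ≤ sepInf (X × ULift.{u} (Fin 6)) :=
    ofReal_le_sepInf fun _ _ => add_le_markedDist hm
  have hdef : ENNReal.ofReal (2 * c) ≤ defectInf (X × ULift.{u} (Fin 6)) :=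
    ofReal_le_defectInf fun _ _ _ => le_markedDist_add_markedDist_sub hm
  have hbij : ENNReal.ofReal (δ / 3) ≤ bijDistortionInf (X × ULift.{u} (Fin 6)) :=
    ofReal_le_bijDistortionInf fun f => eq_refl_of_abs_markedDist_sub_lt hm gadget_iso_eq_refl
      (by decide) f
  refine ⟨X × ULift.{u} (Fin 6), inferInstance, ?_, hsep, hdef, hbij,
    (ENNReal.ofReal_pos.2 (by positivity)).trans_le hsep,
    (ENNReal.ofReal_pos.2 (by positivity)).trans_le hdef,
    (ENNReal.ofReal_pos.2 hm).trans_le hbij⟩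
  exact twoGhDist_le_of_surjective Prod.fst Prod.fst_surjective fun p q =>
    (abs_dist_sub_markedDist_le hm hc.le p q).trans (by linarith)

/-- Generic metric spaces are dense in the Gromov–Hausdorff class: for every metric
space `X`, every `η > 0`, and all `δ, c > 0` with `δ + c ≤ η`, there is a generic
metric space `U` with `d_GH(X, U) ≤ η` (stated as `2 d_GH ≤ 2η`), and moreover
`s(U) ≥ δ/3 + 2c`, `t(U) ≥ 2c`, `e(U) ≥ δ/3`; in particular `s`, `t`, `e` are positive. -/
theorem generic_spaces_dense (X : Type u) [MetricSpace X] (η δ c : ℝ)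
    (hη : 0 < η) (hδ : 0 < δ) (hc : 0 < c) (hδc : δ + c ≤ η) :
    ∃ (U : Type u) (_ : MetricSpace U),
      twoGhDist X U ≤ ENNReal.ofReal (2 * η) ∧
      ENNReal.ofReal (δ / 3 + 2 * c) ≤ sepInf U ∧
      ENNReal.ofReal (2 * c) ≤ defectInf U ∧
      ENNReal.ofReal (δ / 3) ≤ bijDistortionInf U ∧
      0 < sepInf U ∧ 0 < defectInf U ∧ 0 < bijDistortionInf U :=
  generic_spaces_dense_general X η δ c hδ hc hδc
end
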